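/- arXiv:hep-th/0612111 — 4 statements merged into one kernel-verified Lean document; each statement's English description precedes it below -/
import Mathlib

section
/- Let m > 0. For all real p ≥ 0, q ≥ 0 and c ∈ [−1,1] one has ω(p) + Ω(p,q,c) − ω(q) > 0, and moreover (ω(p) + Ω(p,q,c))² − ω(q)² ≥ m²; consequently 1/(ω(p) + Ω(p,q,c) − ω(q)) ≤ (ω(p) + Ω(p,q,c) + ω(q))/m². -/
/-- The one-particle energy `ω(p) = √(p² + m²)`. -/
noncomputable def ω (m p : ℝ) : ℝ := Real.sqrt (p ^ 2 + m ^ 2)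

/-- `Ω(p,q,θ) = √(p² + q² + 2pq cos θ + m²)` in spherical coordinates. -/
noncomputable def Ω (m p q c : ℝ) : ℝ := Real.sqrt (p ^ 2 + q ^ 2 + 2 * p * q * c + m ^ 2)

theorem stmt0 (m : ℝ) (hm : 0 < m) (p q c : ℝ) (hp : 0 ≤ p) (hq : 0 ≤ q)
    (hc : c ∈ Set.Icc (-1 : ℝ) 1) :
    0 < ω m p + Ω m p q c - ω m q ∧
    m ^ 2 ≤ (ω m p + Ω m p q c) ^ 2 - (ω m q) ^ 2 ∧
    1 / (ω m p + Ω m p q c - ω m q) ≤ (ω m p + Ω m p q c + ω m q) / m ^ 2 := by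
  obtain ⟨hc1, hc2⟩ := hc
  have hm2 : 0 < m ^ 2 := by positivity
  have hA0 : 0 ≤ p ^ 2 + q ^ 2 + 2 * p * q * c + m ^ 2 := by
    nlinarith [sq_nonneg (p - q), mul_nonneg hp hq]
  have hΩsq : (Ω m p q c) ^ 2 = p ^ 2 + q ^ 2 + 2 * p * q * c + m ^ 2 := Real.sq_sqrt hA0
  have hωp : (ω m p) ^ 2 = p ^ 2 + m ^ 2 := Real.sq_sqrt (by positivity)
  have hωq : (ω m q) ^ 2 = q ^ 2 + m ^ 2 := Real.sq_sqrt (by positivity)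
  have hωp0 : 0 ≤ ω m p := Real.sqrt_nonneg _
  have hωq0 : 0 ≤ ω m q := Real.sqrt_nonneg _
  have hΩ0 : 0 ≤ Ω m p q c := Real.sqrt_nonneg _
  have hωpp : p ≤ ω m p := by
    rw [ω]
    exact (Real.le_sqrt hp (by positivity)).mpr (by nlinarith)
  have hΩpq : |p - q| ≤ Ω m p q c := by
    rw [Ω]
    refine (Real.le_sqrt (abs_nonneg _) hA0).mpr ?_
    rw [sq_abs]
    nlinarith [mul_nonneg hp hq]
  have h1 : p * |p - q| ≤ ω m p * Ω m p q c :=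
    mul_le_mul hωpp hΩpq (abs_nonneg _) hωp0
  have h2 : q ≤ p + |p - q| := by
    rcases abs_cases (p - q) with ⟨h, _⟩ | ⟨h, _⟩ <;> linarith
  have key : m ^ 2 ≤ (ω m p + Ω m p q c) ^ 2 - (ω m q) ^ 2 := by
    nlinarith [abs_nonneg (p - q), mul_nonneg hp hq]
  have hpos : 0 < ω m p + Ω m p q c - ω m q := by
    nlinarith [add_nonneg hωp0 hΩ0]
  refine ⟨hpos, key, ?_⟩
  rw [div_le_div_iff₀ hpos hm2]
  nlinarith [key]
end

section
/- Let m > 0. For all real p ≥ 0, q ≥ 0 and c ∈ [−1,1], the total exponent appearing in the noncommutative energy-correction integrand satisfies −(10/3)(p² + q²) − (8/3) p q c − ω(p) Ω(p,q,c) + ω(p) ω(q) + ω(q) Ω(p,q,c) ≤ −(3/2) p² − q² + 2 m². -/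
theorem stmt2 (m : ℝ) (hm : 0 < m) (p q c : ℝ) (hp : 0 ≤ p) (hq : 0 ≤ q)
    (hc : c ∈ Set.Icc (-1 : ℝ) 1) :
    -(10 / 3) * (p ^ 2 + q ^ 2) - (8 / 3) * p * q * c
        - ω m p * Ω m p q c + ω m p * ω m q + ω m q * Ω m p q c
      ≤ -(3 / 2) * p ^ 2 - q ^ 2 + 2 * m ^ 2 := by
  obtain ⟨hc1, hc2⟩ := hc
  have hpq : 0 ≤ p * q := mul_nonneg hp hq
  have hpos : (0:ℝ) ≤ p ^ 2 + q ^ 2 + 2 * p * q * c + m ^ 2 := by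
    nlinarith [sq_nonneg (p - q), mul_nonneg hpq (by linarith : (0:ℝ) ≤ c + 1)]
  set a := ω m p with ha
  set b := ω m q with hb
  set w := Ω m p q c with hw
  have ha0 : 0 ≤ a := Real.sqrt_nonneg _
  have hb0 : 0 ≤ b := Real.sqrt_nonneg _
  have hw0 : 0 ≤ w := Real.sqrt_nonneg _
  have ha2 : a ^ 2 = p ^ 2 + m ^ 2 := Real.sq_sqrt (by positivity)
  have hb2 : b ^ 2 = q ^ 2 + m ^ 2 := Real.sq_sqrt (by positivity)
  have hw2 : w ^ 2 = p ^ 2 + q ^ 2 + 2 * p * q * c + m ^ 2 := Real.sq_sqrt hpos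
  have hab : p * q + m ^ 2 ≤ a * b := by
    have h : a * b = Real.sqrt ((p ^ 2 + m ^ 2) * (q ^ 2 + m ^ 2)) := by
      rw [ha, hb, ω, ω, ← Real.sqrt_mul (by positivity)]
    rw [h]
    apply Real.le_sqrt' (by positivity) |>.mpr
    nlinarith [sq_nonneg (p - q), sq_nonneg m]
  nlinarith [sq_nonneg (b - a - w), sq_nonneg (p - q),
    mul_nonneg hpq (by linarith : (0:ℝ) ≤ c + 1), sq_nonneg (a - b), hm.le, sq_nonneg m]
end

section
/- Let m > 0 and q ≥ 0. The function (p, c) ↦ p² · exp(−(10/3) p²) · exp(−(8/3) q p c) · exp(−ω(p) Ω(p,q,c) + ω(p) ω(q)) / (ω(p) Ω(p,q,c)) · [ exp(Ω(p,q,c) ω(q))/(ω(p) + Ω(p,q,c) − ω(q)) + exp(−Ω(p,q,c) ω(q))/(ω(p) + Ω(p,q,c) + ω(q)) ] is integrable on the product (0,∞) × (−1,1). In particular the noncommutative second-order energy correction δE(q) is a finite real number, in contrast with the divergent commutative expression. -/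
set_option maxHeartbeats 1000000

open MeasureTheory

/-- Integrand of the noncommutative second-order energy correction in spherical
coordinates (`c = cos θ`). -/
noncomputable def F (m q p c : ℝ) : ℝ :=
  p ^ 2 * Real.exp (-(10 / 3) * p ^ 2) * Real.exp (-(8 / 3) * q * p * c) *
    Real.exp (-(ω m p) * Ω m p q c + ω m p * ω m q) / (ω m p * Ω m p q c) *
    (Real.exp (Ω m p q c * ω m q) / (ω m p + Ω m p q c - ω m q) +
      Real.exp (-(Ω m p q c) * ω m q) / (ω m p + Ω m p q c + ω m q))

/-- Dominating function. -/
noncomputable def Hfun (m q : ℝ) : ℝ → ℝ := fun p =>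
  (p ^ 3 + p ^ 2) * Real.exp (-(1 / 3) * p ^ 2) *
    (Real.exp ((q + 2 * m) * ω m q + ((8 / 3) * q + 2 * ω m q) ^ 2 / 12) * (2 + m) / m ^ 4 +
      Real.exp (m * ω m q + ((8 / 3) * q + ω m q) ^ 2 / 12) / (2 * m ^ 3))

lemma F_bounds (m q p c : ℝ) (hm : 0 < m) (hq : 0 ≤ q) (hp : 0 < p)
    (hc1 : -1 ≤ c) (hc2 : c ≤ 1) :
    0 ≤ F m q p c ∧ F m q p c ≤ Hfun m q p := by
  have hwp2 : (ω m p) ^ 2 = p ^ 2 + m ^ 2 := by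
    unfold ω; exact Real.sq_sqrt (by positivity)
  have hwq2 : (ω m q) ^ 2 = q ^ 2 + m ^ 2 := by
    unfold ω; exact Real.sq_sqrt (by positivity)
  have hpq : 0 ≤ 2 * p * q * (c + 1) :=
    mul_nonneg (by positivity) (by linarith)
  have hW2 : (Ω m p q c) ^ 2 = p ^ 2 + q ^ 2 + 2 * p * q * c + m ^ 2 := by
    unfold Ω; exact Real.sq_sqrt (by nlinarith [sq_nonneg (p - q), sq_nonneg m])
  have hwp0 : 0 ≤ ω m p := Real.sqrt_nonneg _
  have hwq0 : 0 ≤ ω m q := Real.sqrt_nonneg _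
  have hW0 : 0 ≤ Ω m p q c := Real.sqrt_nonneg _
  have hmwp : m ≤ ω m p := by nlinarith
  have hpwp : p < ω m p := by nlinarith
  have hwpub : ω m p ≤ p + m := by nlinarith
  have hqwq : q ≤ ω m q := by nlinarith
  have hmwq : m ≤ ω m q := by nlinarith
  have hwqub : ω m q ≤ q + m := by nlinarith
  have hmW : m ≤ Ω m p q c := by nlinarith [sq_nonneg (p - q)]
  have hWub : Ω m p q c ≤ p + q + m := by
    have haux : (0 : ℝ) < Ω m p q c + (p + q + m) := by linarith
    have hc' : 0 ≤ 2 * p * q * (1 - c) := mul_nonneg (by positivity) (by linarith)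
    nlinarith [haux, hc']
  have hWlb : ω m q - p ≤ Ω m p q c := by
    rcases le_or_gt (ω m q) p with h | h
    · linarith
    · have hkey : 0 ≤ p * (q * c + ω m q) := by
        apply mul_nonneg hp.le
        nlinarith
      nlinarith
  have hd2 : 0 < ω m p + Ω m p q c - ω m q := by linarith
  have hd3 : 0 < ω m p + Ω m p q c + ω m q := by linarith
  have hden1 : 0 < ω m p * Ω m p q c * (ω m p + Ω m p q c - ω m q) :=
    mul_pos (mul_pos (by linarith) (by linarith)) hd2
  have hden2 : 0 < ω m p * Ω m p q c * (ω m p + Ω m p q c + ω m q) :=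
    mul_pos (mul_pos (by linarith) (by linarith)) hd3
  have hcterm : -(8 / 3) * q * p * c ≤ (8 / 3) * q * p := by nlinarith
  have hwpW : 0 ≤ ω m p * Ω m p q c := mul_nonneg hwp0 hW0
  have he1 : -(10 / 3) * p ^ 2 + -(8 / 3) * q * p * c +
      (-(ω m p) * Ω m p q c + ω m p * ω m q) + Ω m p q c * ω m q ≤
      -(1 / 3) * p ^ 2 + ((q + 2 * m) * ω m q + ((8 / 3) * q + 2 * ω m q) ^ 2 / 12) := by
    have h1 : ω m p * ω m q ≤ (p + m) * ω m q := by nlinarith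
    have h2 : Ω m p q c * ω m q ≤ (p + q + m) * ω m q := by nlinarith
    nlinarith [sq_nonneg ((8 / 3) * q + 2 * ω m q - 6 * p)]
  have he2 : -(10 / 3) * p ^ 2 + -(8 / 3) * q * p * c +
      (-(ω m p) * Ω m p q c + ω m p * ω m q) + -(Ω m p q c) * ω m q ≤
      -(1 / 3) * p ^ 2 + (m * ω m q + ((8 / 3) * q + ω m q) ^ 2 / 12) := by
    have h1 : ω m p * ω m q ≤ (p + m) * ω m q := by nlinarith
    have h3 : 0 ≤ Ω m p q c * ω m q := mul_nonneg hW0 hwq0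
    nlinarith [sq_nonneg ((8 / 3) * q + ω m q - 6 * p)]
  have ha : m ^ 2 ≤ ω m p * Ω m p q c := by nlinarith
  have hb : m ^ 2 ≤ (ω m p + Ω m p q c - ω m q) * (2 * p + m) := by
    have h1 : ω m p - p ≤ ω m p + Ω m p q c - ω m q := by linarith
    have h3 : ω m p + p ≤ 2 * p + m := by linarith
    have hprod : (ω m p - p) * (ω m p + p) = m ^ 2 := by linear_combination hwp2
    calc m ^ 2 = (ω m p - p) * (ω m p + p) := hprod.symm
      _ ≤ (ω m p + Ω m p q c - ω m q) * (2 * p + m) :=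
          mul_le_mul h1 h3 (by linarith) (by linarith)
  have hinv1 : (ω m p * Ω m p q c * (ω m p + Ω m p q c - ω m q))⁻¹ ≤ (2 * p + m) / m ^ 4 := by
    rw [inv_eq_one_div, div_le_div_iff₀ hden1 (by positivity)]
    have key : m ^ 2 * m ^ 2 ≤ (ω m p * Ω m p q c) *
        ((ω m p + Ω m p q c - ω m q) * (2 * p + m)) :=
      mul_le_mul ha hb (by positivity) hwpW
    calc 1 * m ^ 4 = m ^ 2 * m ^ 2 := by ring
      _ ≤ (ω m p * Ω m p q c) * ((ω m p + Ω m p q c - ω m q) * (2 * p + m)) := key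
      _ = (2 * p + m) * (ω m p * Ω m p q c * (ω m p + Ω m p q c - ω m q)) := by ring
  have hinv2 : (ω m p * Ω m p q c * (ω m p + Ω m p q c + ω m q))⁻¹ ≤ 1 / (2 * m ^ 3) := by
    rw [inv_eq_one_div, div_le_div_iff₀ hden2 (by positivity)]
    have key : m ^ 2 * (2 * m) ≤ (ω m p * Ω m p q c) * (ω m p + Ω m p q c + ω m q) :=
      mul_le_mul ha (by linarith) (by positivity) hwpW
    calc 1 * (2 * m ^ 3) = m ^ 2 * (2 * m) := by ring
      _ ≤ (ω m p * Ω m p q c) * (ω m p + Ω m p q c + ω m q) := key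
      _ = 1 * (ω m p * Ω m p q c * (ω m p + Ω m p q c + ω m q)) := by ring
  have hbd1 : p ^ 2 * Real.exp (-(10 / 3) * p ^ 2 + -(8 / 3) * q * p * c +
        (-(ω m p) * Ω m p q c + ω m p * ω m q) + Ω m p q c * ω m q) /
      (ω m p * Ω m p q c * (ω m p + Ω m p q c - ω m q)) ≤
      (p ^ 3 + p ^ 2) * Real.exp (-(1 / 3) * p ^ 2) *
        (Real.exp ((q + 2 * m) * ω m q + ((8 / 3) * q + 2 * ω m q) ^ 2 / 12) * (2 + m) / m ^ 4) := by
    have step1 : p ^ 2 * Real.exp (-(10 / 3) * p ^ 2 + -(8 / 3) * q * p * c +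
          (-(ω m p) * Ω m p q c + ω m p * ω m q) + Ω m p q c * ω m q) /
        (ω m p * Ω m p q c * (ω m p + Ω m p q c - ω m q)) ≤
        p ^ 2 * Real.exp (-(1 / 3) * p ^ 2 +
          ((q + 2 * m) * ω m q + ((8 / 3) * q + 2 * ω m q) ^ 2 / 12)) * ((2 * p + m) / m ^ 4) := by
      rw [div_eq_mul_inv]
      apply mul_le_mul _ hinv1 (by positivity) (by positivity)
      exact mul_le_mul_of_nonneg_left (Real.exp_le_exp.mpr he1) (by positivity)
    have step2 : p ^ 2 * Real.exp (-(1 / 3) * p ^ 2 +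
          ((q + 2 * m) * ω m q + ((8 / 3) * q + 2 * ω m q) ^ 2 / 12)) * ((2 * p + m) / m ^ 4) =
        (p ^ 2 * (2 * p + m)) * (Real.exp (-(1 / 3) * p ^ 2) *
          Real.exp ((q + 2 * m) * ω m q + ((8 / 3) * q + 2 * ω m q) ^ 2 / 12)) / m ^ 4 := by
      rw [Real.exp_add]; ring
    have step3 : (p ^ 2 * (2 * p + m)) * (Real.exp (-(1 / 3) * p ^ 2) *
          Real.exp ((q + 2 * m) * ω m q + ((8 / 3) * q + 2 * ω m q) ^ 2 / 12)) / m ^ 4 ≤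
        ((p ^ 3 + p ^ 2) * (2 + m)) * (Real.exp (-(1 / 3) * p ^ 2) *
          Real.exp ((q + 2 * m) * ω m q + ((8 / 3) * q + 2 * ω m q) ^ 2 / 12)) / m ^ 4 := by
      gcongr ?_ * _ / _
      have haux : 0 ≤ m * p ^ 3 + 2 * p ^ 2 := by positivity
      linarith [haux]
    have step4 : ((p ^ 3 + p ^ 2) * (2 + m)) * (Real.exp (-(1 / 3) * p ^ 2) *
          Real.exp ((q + 2 * m) * ω m q + ((8 / 3) * q + 2 * ω m q) ^ 2 / 12)) / m ^ 4 =
        (p ^ 3 + p ^ 2) * Real.exp (-(1 / 3) * p ^ 2) *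
          (Real.exp ((q + 2 * m) * ω m q + ((8 / 3) * q + 2 * ω m q) ^ 2 / 12) * (2 + m) / m ^ 4) := by
      ring
    linarith [step1, step2.le, step2.ge, step3, step4.le, step4.ge]
  have hbd2 : p ^ 2 * Real.exp (-(10 / 3) * p ^ 2 + -(8 / 3) * q * p * c +
        (-(ω m p) * Ω m p q c + ω m p * ω m q) + -(Ω m p q c) * ω m q) /
      (ω m p * Ω m p q c * (ω m p + Ω m p q c + ω m q)) ≤
      (p ^ 3 + p ^ 2) * Real.exp (-(1 / 3) * p ^ 2) *
        (Real.exp (m * ω m q + ((8 / 3) * q + ω m q) ^ 2 / 12) / (2 * m ^ 3)) := by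
    have step1 : p ^ 2 * Real.exp (-(10 / 3) * p ^ 2 + -(8 / 3) * q * p * c +
          (-(ω m p) * Ω m p q c + ω m p * ω m q) + -(Ω m p q c) * ω m q) /
        (ω m p * Ω m p q c * (ω m p + Ω m p q c + ω m q)) ≤
        p ^ 2 * Real.exp (-(1 / 3) * p ^ 2 +
          (m * ω m q + ((8 / 3) * q + ω m q) ^ 2 / 12)) * (1 / (2 * m ^ 3)) := by
      rw [div_eq_mul_inv]
      apply mul_le_mul _ hinv2 (by positivity) (by positivity)
      exact mul_le_mul_of_nonneg_left (Real.exp_le_exp.mpr he2) (by positivity)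
    have step2 : p ^ 2 * Real.exp (-(1 / 3) * p ^ 2 +
          (m * ω m q + ((8 / 3) * q + ω m q) ^ 2 / 12)) * (1 / (2 * m ^ 3)) =
        p ^ 2 * (Real.exp (-(1 / 3) * p ^ 2) *
          Real.exp (m * ω m q + ((8 / 3) * q + ω m q) ^ 2 / 12)) / (2 * m ^ 3) := by
      rw [Real.exp_add]; ring
    have step3 : p ^ 2 * (Real.exp (-(1 / 3) * p ^ 2) *
          Real.exp (m * ω m q + ((8 / 3) * q + ω m q) ^ 2 / 12)) / (2 * m ^ 3) ≤
        (p ^ 3 + p ^ 2) * (Real.exp (-(1 / 3) * p ^ 2) *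
          Real.exp (m * ω m q + ((8 / 3) * q + ω m q) ^ 2 / 12)) / (2 * m ^ 3) := by
      gcongr ?_ * _ / _
      have haux : 0 ≤ p ^ 3 := by positivity
      linarith [haux]
    have step4 : (p ^ 3 + p ^ 2) * (Real.exp (-(1 / 3) * p ^ 2) *
          Real.exp (m * ω m q + ((8 / 3) * q + ω m q) ^ 2 / 12)) / (2 * m ^ 3) =
        (p ^ 3 + p ^ 2) * Real.exp (-(1 / 3) * p ^ 2) *
          (Real.exp (m * ω m q + ((8 / 3) * q + ω m q) ^ 2 / 12) / (2 * m ^ 3)) := by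
      ring
    linarith [step1, step2.le, step2.ge, step3, step4.le, step4.ge]
  have hF0 : F m q p c =
      p ^ 2 * Real.exp (-(10 / 3) * p ^ 2 + -(8 / 3) * q * p * c +
          (-(ω m p) * Ω m p q c + ω m p * ω m q) + Ω m p q c * ω m q) /
        (ω m p * Ω m p q c) / (ω m p + Ω m p q c - ω m q) +
      p ^ 2 * Real.exp (-(10 / 3) * p ^ 2 + -(8 / 3) * q * p * c +
          (-(ω m p) * Ω m p q c + ω m p * ω m q) + -(Ω m p q c) * ω m q) /
        (ω m p * Ω m p q c) / (ω m p + Ω m p q c + ω m q) := by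
    unfold F
    simp only [Real.exp_add]
    ring
  have hF : F m q p c =
      p ^ 2 * Real.exp (-(10 / 3) * p ^ 2 + -(8 / 3) * q * p * c +
          (-(ω m p) * Ω m p q c + ω m p * ω m q) + Ω m p q c * ω m q) /
        (ω m p * Ω m p q c * (ω m p + Ω m p q c - ω m q)) +
      p ^ 2 * Real.exp (-(10 / 3) * p ^ 2 + -(8 / 3) * q * p * c +
          (-(ω m p) * Ω m p q c + ω m p * ω m q) + -(Ω m p q c) * ω m q) /
        (ω m p * Ω m p q c * (ω m p + Ω m p q c + ω m q)) := by
    rw [hF0, div_div, div_div]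
  have hnn : 0 ≤ F m q p c := by
    rw [hF]
    have h1 : 0 ≤ p ^ 2 * Real.exp (-(10 / 3) * p ^ 2 + -(8 / 3) * q * p * c +
        (-(ω m p) * Ω m p q c + ω m p * ω m q) + Ω m p q c * ω m q) /
        (ω m p * Ω m p q c * (ω m p + Ω m p q c - ω m q)) :=
      div_nonneg (by positivity) hden1.le
    have h2 : 0 ≤ p ^ 2 * Real.exp (-(10 / 3) * p ^ 2 + -(8 / 3) * q * p * c +
        (-(ω m p) * Ω m p q c + ω m p * ω m q) + -(Ω m p q c) * ω m q) /
        (ω m p * Ω m p q c * (ω m p + Ω m p q c + ω m q)) :=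
      div_nonneg (by positivity) hden2.le
    linarith
  refine ⟨hnn, ?_⟩
  rw [hF]
  calc _ ≤ _ := add_le_add hbd1 hbd2
    _ = Hfun m q p := by unfold Hfun; ring

lemma Hfun_integrable (m q : ℝ) :
    IntegrableOn (Hfun m q) (Set.Ioi (0 : ℝ)) := by
  have h3 : IntegrableOn (fun p : ℝ => p ^ 3 * Real.exp (-(1 / 3) * p ^ 2)) (Set.Ioi 0) := by
    have := integrableOn_rpow_mul_exp_neg_mul_sq (b := 1 / 3) (by norm_num) (s := 3) (by norm_num)
    apply this.congr_fun _ measurableSet_Ioi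
    intro x hx
    simp only
    rw [show (3 : ℝ) = ((3 : ℕ) : ℝ) by norm_num, Real.rpow_natCast]
  have h2 : IntegrableOn (fun p : ℝ => p ^ 2 * Real.exp (-(1 / 3) * p ^ 2)) (Set.Ioi 0) := by
    have := integrableOn_rpow_mul_exp_neg_mul_sq (b := 1 / 3) (by norm_num) (s := 2) (by norm_num)
    apply this.congr_fun _ measurableSet_Ioi
    intro x hx
    simp only
    rw [show (2 : ℝ) = ((2 : ℕ) : ℝ) by norm_num, Real.rpow_natCast]
  have hsum := (h3.add h2).mul_const
    (Real.exp ((q + 2 * m) * ω m q + ((8 / 3) * q + 2 * ω m q) ^ 2 / 12) * (2 + m) / m ^ 4 +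
      Real.exp (m * ω m q + ((8 / 3) * q + ω m q) ^ 2 / 12) / (2 * m ^ 3))
  exact hsum.congr (Filter.Eventually.of_forall fun x => by
    simp only [Pi.add_apply, Hfun]; ring)

theorem stmt3 (m : ℝ) (hm : 0 < m) (q : ℝ) (hq : 0 ≤ q) :
    IntegrableOn (fun z : ℝ × ℝ => F m q z.1 z.2)
      (Set.Ioi (0 : ℝ) ×ˢ Set.Ioo (-1 : ℝ) 1) := by
  have hmeas : AEStronglyMeasurable (fun z : ℝ × ℝ => F m q z.1 z.2)
      (volume.restrict (Set.Ioi (0 : ℝ) ×ˢ Set.Ioo (-1 : ℝ) 1)) := by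
    apply Measurable.aestronglyMeasurable
    unfold F ω Ω
    fun_prop
  have hH : IntegrableOn (fun z : ℝ × ℝ => Hfun m q z.1)
      (Set.Ioi (0 : ℝ) ×ˢ Set.Ioo (-1 : ℝ) 1) := by
    have h1 : Integrable (Hfun m q) (volume.restrict (Set.Ioi (0 : ℝ))) :=
      Hfun_integrable m q
    have h2 : Integrable (fun _ : ℝ => (1 : ℝ)) (volume.restrict (Set.Ioo (-1 : ℝ) 1)) :=
      integrable_const _
    have hrestrict : (volume : Measure (ℝ × ℝ)).restrict
          (Set.Ioi (0 : ℝ) ×ˢ Set.Ioo (-1 : ℝ) 1)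
        = (volume.restrict (Set.Ioi (0 : ℝ))).prod (volume.restrict (Set.Ioo (-1 : ℝ) 1)) := by
      rw [Measure.volume_eq_prod, Measure.prod_restrict]
    unfold IntegrableOn
    rw [hrestrict]
    simpa using h1.mul_prod h2
  apply Integrable.mono' hH hmeas
  have hs : MeasurableSet (Set.Ioi (0 : ℝ) ×ˢ Set.Ioo (-1 : ℝ) 1) :=
    measurableSet_Ioi.prod measurableSet_Ioo
  filter_upwards [ae_restrict_mem hs] with z hz
  obtain ⟨hz1, hz2⟩ := hz
  have hb := F_bounds m q z.1 z.2 hm hq hz1 hz2.1.le hz2.2.le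
  rw [Real.norm_eq_abs, abs_of_nonneg hb.1]
  exact hb.2
end

section
/- Let m > 0. For every q ≥ 0 the noncommutative second-order energy correction is strictly positive: δE(q) > 0. -/
open MeasureTheory Real Set

section basic
variable {m q p c : ℝ}

lemma omega_nonneg : 0 ≤ ω m p := Real.sqrt_nonneg _
lemma Omega_nonneg : 0 ≤ Ω m p q c := Real.sqrt_nonneg _

lemma omega_sq (hm : 0 ≤ m) : ω m p ^ 2 = p ^ 2 + m ^ 2 :=
  Real.sq_sqrt (by positivity)

lemma m_le_omega (hm : 0 ≤ m) : m ≤ ω m p := by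
  have h : Real.sqrt (m ^ 2) ≤ Real.sqrt (p ^ 2 + m ^ 2) :=
    Real.sqrt_le_sqrt (by nlinarith [sq_nonneg p])
  rwa [Real.sqrt_sq hm] at h

lemma le_omega (hp : 0 ≤ p) : p ≤ ω m p := by
  have h : Real.sqrt (p ^ 2) ≤ Real.sqrt (p ^ 2 + m ^ 2) :=
    Real.sqrt_le_sqrt (by nlinarith [sq_nonneg m])
  rwa [Real.sqrt_sq hp] at h

lemma omega_le (hm : 0 ≤ m) (hp : 0 ≤ p) : ω m p ≤ p + m := by
  have h : Real.sqrt (p ^ 2 + m ^ 2) ≤ Real.sqrt ((p + m) ^ 2) :=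
    Real.sqrt_le_sqrt (by nlinarith [mul_nonneg hp hm])
  rwa [Real.sqrt_sq (by positivity)] at h

lemma Omega_arg_nonneg (hp : 0 ≤ p) (hq : 0 ≤ q) (hc : -1 ≤ c) :
    0 ≤ p ^ 2 + q ^ 2 + 2 * p * q * c + m ^ 2 := by
  nlinarith [mul_nonneg (mul_nonneg hp hq) (by linarith : (0:ℝ) ≤ c + 1), sq_nonneg (p - q)]

lemma Omega_sq (hp : 0 ≤ p) (hq : 0 ≤ q) (hc : -1 ≤ c) :
    Ω m p q c ^ 2 = p ^ 2 + q ^ 2 + 2 * p * q * c + m ^ 2 :=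
  Real.sq_sqrt (Omega_arg_nonneg hp hq hc)

lemma m_le_Omega (hm : 0 ≤ m) (hp : 0 ≤ p) (hq : 0 ≤ q) (hc : -1 ≤ c) : m ≤ Ω m p q c := by
  have h : Real.sqrt (m ^ 2) ≤ Real.sqrt (p ^ 2 + q ^ 2 + 2 * p * q * c + m ^ 2) :=
    Real.sqrt_le_sqrt (by nlinarith [mul_nonneg (mul_nonneg hp hq) (by linarith : (0:ℝ) ≤ c + 1), sq_nonneg (p - q)])
  rwa [Real.sqrt_sq hm] at h

lemma abs_sub_le_Omega (hp : 0 ≤ p) (hq : 0 ≤ q) (hc : -1 ≤ c) : |p - q| ≤ Ω m p q c := by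
  have h : Real.sqrt ((p - q) ^ 2) ≤ Real.sqrt (p ^ 2 + q ^ 2 + 2 * p * q * c + m ^ 2) :=
    Real.sqrt_le_sqrt (by nlinarith [mul_nonneg (mul_nonneg hp hq) (by linarith : (0:ℝ) ≤ c + 1), sq_nonneg m])
  rwa [Real.sqrt_sq_eq_abs] at h

lemma Omega_le (hm : 0 ≤ m) (hp : 0 ≤ p) (hq : 0 ≤ q) (hc : c ≤ 1) :
    Ω m p q c ≤ p + q + m := by
  have h : Real.sqrt (p ^ 2 + q ^ 2 + 2 * p * q * c + m ^ 2) ≤ Real.sqrt ((p + q + m) ^ 2) :=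
    Real.sqrt_le_sqrt (by nlinarith [mul_nonneg (mul_nonneg hp hq) (by linarith : (0:ℝ) ≤ 1 - c), mul_nonneg hp hm, mul_nonneg hq hm])
  rwa [Real.sqrt_sq (by positivity)] at h

lemma key_sq (hm : 0 ≤ m) (hp : 0 ≤ p) (hq : 0 ≤ q) (hc : -1 ≤ c) :
    ω m q ^ 2 + m ^ 2 ≤ (ω m p + Ω m p q c) ^ 2 := by
  have h1 := omega_sq (p := p) hm
  have h2 := Omega_sq (m := m) hp hq hc
  have h5 := omega_sq (p := q) hm
  have h3 := le_omega (m := m) hp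
  have h4 := abs_sub_le_Omega (m := m) hp hq hc
  have hω0 : 0 ≤ ω m p := omega_nonneg
  have hmul : p * |p - q| ≤ ω m p * Ω m p q c :=
    mul_le_mul h3 h4 (abs_nonneg _) hω0
  have h6 : 0 ≤ p * q * (c + 1) :=
    mul_nonneg (mul_nonneg hp hq) (by linarith)
  have h7 : 0 ≤ p * (|p - q| - (q - p)) :=
    mul_nonneg hp (by linarith [neg_abs_le (p - q)])
  nlinarith [hmul, h6, h7]

lemma key_lt (hm : 0 < m) (hp : 0 ≤ p) (hq : 0 ≤ q) (hc : -1 ≤ c) :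
    ω m q < ω m p + Ω m p q c := by
  have h := key_sq hm.le hp hq hc
  have h0 : 0 ≤ ω m q := omega_nonneg
  have h1 : 0 ≤ ω m p + Ω m p q c := add_nonneg omega_nonneg Omega_nonneg
  nlinarith
end basic

section Fprops
variable {m q p c : ℝ}

lemma omega_pos (hm : 0 < m) : 0 < ω m p := lt_of_lt_of_le hm (m_le_omega hm.le)

lemma Omega_pos (hm : 0 < m) (hp : 0 ≤ p) (hq : 0 ≤ q) (hc : -1 ≤ c) : 0 < Ω m p q c :=
  lt_of_lt_of_le hm (m_le_Omega hm.le hp hq hc)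

lemma d1_pos (hm : 0 < m) (hp : 0 ≤ p) (hq : 0 ≤ q) (hc : -1 ≤ c) :
    0 < ω m p + Ω m p q c - ω m q := sub_pos.mpr (key_lt hm hp hq hc)

lemma d2_pos (hm : 0 < m) (hp : 0 ≤ p) (hq : 0 ≤ q) (hc : -1 ≤ c) :
    0 < ω m p + Ω m p q c + ω m q :=
  add_pos (add_pos (omega_pos hm) (Omega_pos hm hp hq hc)) (omega_pos hm)

lemma F_pos (hm : 0 < m) (hp : 0 < p) (hq : 0 ≤ q) (hc1 : -1 ≤ c) : 0 < F m q p c := by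
  have h1 := omega_pos (p := p) hm
  have h2 := Omega_pos hm hp.le hq hc1
  have h3 := d1_pos hm hp.le hq hc1
  have h4 := d2_pos hm hp.le hq hc1
  unfold F
  exact mul_pos (div_pos (by positivity) (mul_pos h1 h2))
    (add_pos (div_pos (Real.exp_pos _) h3) (div_pos (Real.exp_pos _) h4))

lemma F_nonneg (hm : 0 < m) (hp : 0 ≤ p) (hq : 0 ≤ q) (hc1 : -1 ≤ c) : 0 ≤ F m q p c := by
  have h1 := omega_pos (p := p) hm
  have h2 := Omega_pos hm hp hq hc1
  have h3 := d1_pos hm hp hq hc1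
  have h4 := d2_pos hm hp hq hc1
  unfold F
  exact mul_nonneg (div_nonneg (by positivity) (mul_pos h1 h2).le)
    (add_nonneg (div_nonneg (Real.exp_pos _).le h3.le) (div_nonneg (Real.exp_pos _).le h4.le))

lemma F_contOn (hm : 0 < m) (hp : 0 ≤ p) (hq : 0 ≤ q) :
    ContinuousOn (F m q p) (Icc (-1 : ℝ) 1) := by
  have hd0 : ∀ c ∈ Icc (-1:ℝ) 1, ω m p * Ω m p q c ≠ 0 := fun c hc =>
    (mul_pos (omega_pos hm) (Omega_pos hm hp hq hc.1)).ne'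
  have hd1 : ∀ c ∈ Icc (-1:ℝ) 1, ω m p + Ω m p q c - ω m q ≠ 0 := fun c hc =>
    (d1_pos hm hp hq hc.1).ne'
  have hd2 : ∀ c ∈ Icc (-1:ℝ) 1, ω m p + Ω m p q c + ω m q ≠ 0 := fun c hc =>
    (d2_pos hm hp hq hc.1).ne'
  unfold F ω Ω at *
  exact ContinuousOn.mul
    (ContinuousOn.div (by fun_prop) (by fun_prop) hd0)
    (ContinuousOn.add
      (ContinuousOn.div (by fun_prop) (by fun_prop) hd1)
      (ContinuousOn.div (by fun_prop) (by fun_prop) hd2))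
end Fprops

set_option maxHeartbeats 800000 in
lemma F_le {m q p c : ℝ} (hm : 0 < m) (hp : 0 ≤ p) (hq : 0 ≤ q) (hc1 : -1 ≤ c) (hc2 : c ≤ 1) :
    F m q p c ≤ p ^ 2 * Real.exp (-(10/3)*p^2 + (8/3)*q*p + (2*p+q+2*m) * ω m q) *
      ((2*p + (q + 2*m + ω m q))/m^4 + 1/(2*m^3)) := by
  have hsplit : F m q p c =
      p ^ 2 * Real.exp (-(10/3)*p^2 + -(8/3)*q*p*c + (-(ω m p * Ω m p q c) + ω m p * ω m q)
          + Ω m p q c * ω m q) *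
        (1/(ω m p * Ω m p q c) * (1/(ω m p + Ω m p q c - ω m q))) +
      p ^ 2 * Real.exp (-(10/3)*p^2 + -(8/3)*q*p*c + (-(ω m p * Ω m p q c) + ω m p * ω m q)
          + -(Ω m p q c * ω m q)) *
        (1/(ω m p * Ω m p q c) * (1/(ω m p + Ω m p q c + ω m q))) := by
    unfold F
    simp only [Real.exp_add]
    ring
  rw [hsplit]
  set w := ω m p with hw
  set W := Ω m p q c with hW
  set u := ω m q with hu
  have hw0 : 0 < w := omega_pos hm
  have hW0 : 0 < W := Omega_pos hm hp hq hc1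
  have hu0 : 0 ≤ u := omega_nonneg
  have hwm : m ≤ w := m_le_omega hm.le
  have hWm : m ≤ W := m_le_Omega hm.le hp hq hc1
  have hwle : w ≤ p + m := omega_le hm.le hp
  have hWle : W ≤ p + q + m := Omega_le hm.le hp hq hc2
  have hum : m ≤ u := m_le_omega hm.le
  have hd1 : 0 < w + W - u := d1_pos hm hp hq hc1
  have hd2 : 0 < w + W + u := d2_pos hm hp hq hc1
  have hkey : u ^ 2 + m ^ 2 ≤ (w + W) ^ 2 := key_sq hm.le hp hq hc1
  have hqpc : 0 ≤ q * p * (1 + c) := mul_nonneg (mul_nonneg hq hp) (by linarith)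
  have hwW : m ^ 2 ≤ w * W := by nlinarith
  have hwu : w * u ≤ (p + m) * u := mul_le_mul_of_nonneg_right hwle hu0
  have hWu : W * u ≤ (p + q + m) * u := mul_le_mul_of_nonneg_right hWle hu0
  have hWu0 : 0 ≤ W * u := mul_nonneg hW0.le hu0
  have hm2 : (0:ℝ) < m ^ 2 := by positivity
  have hS1 : -(10/3)*p^2 + -(8/3)*q*p*c + (-(w * W) + w * u) + W * u
      ≤ -(10/3)*p^2 + (8/3)*q*p + (2*p+q+2*m) * u := by nlinarith
  have hS2 : -(10/3)*p^2 + -(8/3)*q*p*c + (-(w * W) + w * u) + -(W * u)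
      ≤ -(10/3)*p^2 + (8/3)*q*p + (2*p+q+2*m) * u := by
    nlinarith [mul_nonneg hp hu0, mul_nonneg hq hu0, mul_nonneg hm.le hu0]
  have hr1 : 1/(w * W) * (1/(w + W - u)) ≤ (2*p + (q + 2*m + u))/m^4 := by
    rw [div_mul_div_comm, one_mul,
      div_le_div_iff₀ (by positivity) (by positivity)]
    have e1 : m ^ 2 ≤ (w + W - u) * (w + W + u) := by nlinarith
    have e2 : w + W + u ≤ 2*p + (q + 2*m + u) := by linarith
    have e3 : m ^ 2 * m ^ 2 ≤ (w * W) * ((w + W - u) * (w + W + u)) :=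
      mul_le_mul hwW e1 (by positivity) (mul_pos hw0 hW0).le
    have e4 : (w * W) * ((w + W - u) * (w + W + u)) ≤ (w * W) * ((w + W - u) * (2*p + (q + 2*m + u))) := by
      apply mul_le_mul_of_nonneg_left _ (mul_pos hw0 hW0).le
      exact mul_le_mul_of_nonneg_left e2 hd1.le
    nlinarith [e3, e4]
  have hr2 : 1/(w * W) * (1/(w + W + u)) ≤ 1/(2*m^3) := by
    rw [div_mul_div_comm, one_mul,
      div_le_div_iff₀ (by positivity) (by positivity)]
    have e1 : 2*m ≤ w + W + u := by linarith
    have e3 : m ^ 2 * (2*m) ≤ (w * W) * (w + W + u) :=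
      mul_le_mul hwW e1 (by positivity) (mul_pos hw0 hW0).le
    nlinarith [e3]
  have hpos : (0:ℝ) ≤ p ^ 2 * Real.exp (-(10/3)*p^2 + (8/3)*q*p + (2*p+q+2*m) * u) := by positivity
  calc p ^ 2 * Real.exp (-(10/3)*p^2 + -(8/3)*q*p*c + (-(w * W) + w * u) + W * u) *
        (1/(w * W) * (1/(w + W - u))) +
      p ^ 2 * Real.exp (-(10/3)*p^2 + -(8/3)*q*p*c + (-(w * W) + w * u) + -(W * u)) *
        (1/(w * W) * (1/(w + W + u)))
      ≤ p ^ 2 * Real.exp (-(10/3)*p^2 + (8/3)*q*p + (2*p+q+2*m) * u) * ((2*p + (q + 2*m + u))/m^4) +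
        p ^ 2 * Real.exp (-(10/3)*p^2 + (8/3)*q*p + (2*p+q+2*m) * u) * (1/(2*m^3)) := by
        apply add_le_add
        · exact mul_le_mul (mul_le_mul_of_nonneg_left (Real.exp_le_exp.mpr hS1) (sq_nonneg p))
            hr1 (by positivity) hpos
        · exact mul_le_mul (mul_le_mul_of_nonneg_left (Real.exp_le_exp.mpr hS2) (sq_nonneg p))
            hr2 (by positivity) hpos
    _ = p ^ 2 * Real.exp (-(10/3)*p^2 + (8/3)*q*p + (2*p+q+2*m) * u) *
        ((2*p + (q + 2*m + u))/m^4 + 1/(2*m^3)) := by ring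

lemma G_bound {m q p : ℝ} (hm : 0 < m) (hq : 0 ≤ q) (hp : 0 ≤ p) :
    2 * (p ^ 2 * Real.exp (-(10/3)*p^2 + (8/3)*q*p + (2*p+q+2*m) * ω m q) *
      ((2*p + (q + 2*m + ω m q))/m^4 + 1/(2*m^3)))
    ≤ (4*Real.exp ((q+2*m)*ω m q + 3*((8/3)*q + 2*ω m q)^2/28)/m^4) * (p^3 * Real.exp (-p^2))
      + (2*Real.exp ((q+2*m)*ω m q + 3*((8/3)*q + 2*ω m q)^2/28) * ((q+2*m+ω m q)/m^4 + 1/(2*m^3)))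
        * (p^2 * Real.exp (-p^2)) := by
  have hu0 : 0 ≤ ω m q := omega_nonneg
  set u := ω m q with hu
  have hexp : Real.exp (-(10/3)*p^2 + (8/3)*q*p + (2*p+q+2*m) * u)
      ≤ Real.exp ((q+2*m)*u + 3*((8/3)*q + 2*u)^2/28) * Real.exp (-p^2) := by
    rw [← Real.exp_add]
    exact Real.exp_le_exp.mpr (by nlinarith [sq_nonneg (3*((8/3)*q + 2*u) - 14*p)])
  calc 2 * (p ^ 2 * Real.exp (-(10/3)*p^2 + (8/3)*q*p + (2*p+q+2*m) * u) *
        ((2*p + (q + 2*m + u))/m^4 + 1/(2*m^3)))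
      = (2 * p ^ 2 * ((2*p + (q + 2*m + u))/m^4 + 1/(2*m^3))) *
        Real.exp (-(10/3)*p^2 + (8/3)*q*p + (2*p+q+2*m) * u) := by ring
    _ ≤ (2 * p ^ 2 * ((2*p + (q + 2*m + u))/m^4 + 1/(2*m^3))) *
        (Real.exp ((q+2*m)*u + 3*((8/3)*q + 2*u)^2/28) * Real.exp (-p^2)) := by
        apply mul_le_mul_of_nonneg_left hexp (by positivity)
    _ = (4*Real.exp ((q+2*m)*u + 3*((8/3)*q + 2*u)^2/28)/m^4) * (p^3 * Real.exp (-p^2))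
      + (2*Real.exp ((q+2*m)*u + 3*((8/3)*q + 2*u)^2/28) * ((q+2*m+u)/m^4 + 1/(2*m^3)))
        * (p^2 * Real.exp (-p^2)) := by ring

lemma int_aux (K L : ℝ) :
    IntegrableOn (fun p : ℝ => K * (p^3 * Real.exp (-p^2)) + L * (p^2 * Real.exp (-p^2)))
      (Ioi (0:ℝ)) := by
  have h3 : IntegrableOn (fun p : ℝ => p ^ (3:ℝ) * Real.exp (-1*p^2)) (Ioi 0) :=
    integrableOn_rpow_mul_exp_neg_mul_sq one_pos (by norm_num)
  have h2 : IntegrableOn (fun p : ℝ => p ^ (2:ℝ) * Real.exp (-1*p^2)) (Ioi 0) :=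
    integrableOn_rpow_mul_exp_neg_mul_sq one_pos (by norm_num)
  have h3' : IntegrableOn (fun p : ℝ => p^3 * Real.exp (-p^2)) (Ioi 0) := by
    apply h3.congr_fun _ measurableSet_Ioi
    intro x hx
    show x ^ (3:ℝ) * Real.exp (-1*x^2) = x^3 * Real.exp (-x^2)
    rw [show (3:ℝ) = ((3:ℕ):ℝ) by norm_num, Real.rpow_natCast, neg_one_mul]
  have h2' : IntegrableOn (fun p : ℝ => p^2 * Real.exp (-p^2)) (Ioi 0) := by
    apply h2.congr_fun _ measurableSet_Ioi
    intro x hx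
    show x ^ (2:ℝ) * Real.exp (-1*x^2) = x^2 * Real.exp (-x^2)
    rw [show (2:ℝ) = ((2:ℕ):ℝ) by norm_num, Real.rpow_natCast, neg_one_mul]
  exact (h3'.const_mul K).add (h2'.const_mul L)

lemma g_meas (m q : ℝ) :
    AEStronglyMeasurable (fun p => ∫ c in (-1:ℝ)..1, F m q p c) (volume.restrict (Ioi 0)) := by
  have h : StronglyMeasurable fun p => ∫ c in Ioc (-1:ℝ) 1, F m q p c := by
    apply StronglyMeasurable.integral_prod_right (f := fun p c => F m q p c)
    apply Measurable.stronglyMeasurable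
    unfold Function.uncurry F ω Ω
    fun_prop
  have he : (fun p => ∫ c in (-1:ℝ)..1, F m q p c)
      = fun p => ∫ c in Ioc (-1:ℝ) 1, F m q p c := by
    funext p
    rw [intervalIntegral.integral_of_le (by norm_num : (-1:ℝ) ≤ 1)]
  rw [he]
  exact h.aestronglyMeasurable

/-- The noncommutative second-order energy correction `δE(q)`. -/
noncomputable def δE (m q : ℝ) : ℝ :=
  Real.exp (-(10 / 3) * q ^ 2 - 2 * m) / (16 * (2 * Real.pi) ^ 5 * ω m q) *
    ∫ p in Set.Ioi (0 : ℝ), ∫ c in (-1 : ℝ)..1, F m q p c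

theorem stmt4 (m : ℝ) (hm : 0 < m) (q : ℝ) (hq : 0 ≤ q) : 0 < δE m q := by
  have hωq : 0 < ω m q := omega_pos hm
  have hpi := Real.pi_pos
  set g : ℝ → ℝ := fun p => ∫ c in (-1:ℝ)..1, F m q p c with hgdef
  set G : ℝ → ℝ := fun p =>
    (4*Real.exp ((q+2*m)*ω m q + 3*((8/3)*q + 2*ω m q)^2/28)/m^4) * (p^3 * Real.exp (-p^2))
      + (2*Real.exp ((q+2*m)*ω m q + 3*((8/3)*q + 2*ω m q)^2/28)
          * ((q+2*m+ω m q)/m^4 + 1/(2*m^3))) * (p^2 * Real.exp (-p^2)) with hGdef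
  have hgpos : ∀ p ∈ Ioi (0:ℝ), 0 < g p := by
    intro p hp
    have hp0 : (0:ℝ) < p := hp
    have hInt : IntervalIntegrable (F m q p) volume (-1) 1 := by
      apply ContinuousOn.intervalIntegrable
      rw [uIcc_of_le (by norm_num)]
      exact F_contOn hm hp0.le hq
    exact intervalIntegral.intervalIntegral_pos_of_pos_on hInt
      (fun c hc => F_pos hm hp0 hq hc.1.le) (by norm_num)
  have hbound : ∀ p ∈ Ioi (0:ℝ), ‖g p‖ ≤ G p := by
    intro p hp
    have hp0 : (0:ℝ) < p := hp
    have h1 : ‖g p‖ ≤ (p ^ 2 *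
        Real.exp (-(10/3)*p^2 + (8/3)*q*p + (2*p+q+2*m) * ω m q) *
        ((2*p + (q + 2*m + ω m q))/m^4 + 1/(2*m^3))) * |1 - (-1:ℝ)| := by
      apply intervalIntegral.norm_integral_le_of_norm_le_const
      intro c hc
      rw [Set.uIoc_of_le (by norm_num : (-1:ℝ) ≤ 1)] at hc
      rw [Real.norm_eq_abs, abs_of_nonneg (F_nonneg hm hp0.le hq hc.1.le)]
      exact F_le hm hp0.le hq hc.1.le hc.2
    rw [show |1 - (-1:ℝ)| = 2 by norm_num, mul_comm] at h1
    exact le_trans h1 (G_bound hm hq hp0.le)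
  have hgint : IntegrableOn g (Ioi (0:ℝ)) := by
    apply Integrable.mono' (int_aux _ _) (g_meas m q)
    rw [ae_restrict_iff' measurableSet_Ioi]
    exact Filter.Eventually.of_forall hbound
  have hint_pos : 0 < ∫ p in Ioi (0:ℝ), g p := by
    refine (setIntegral_pos_iff_support_of_nonneg_ae ?_ hgint).mpr ?_
    · filter_upwards [ae_restrict_mem measurableSet_Ioi] with p hp
      exact (hgpos p hp).le
    · refine lt_of_lt_of_le ?_
        (measure_mono (fun p hp => ⟨(hgpos p hp).ne', hp⟩ :
          Ioi (0:ℝ) ⊆ Function.support g ∩ Ioi 0))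
      rw [Real.volume_Ioi]
      exact ENNReal.zero_lt_top
  unfold δE
  exact mul_pos (by positivity) hint_pos
end
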